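/- arXiv:2502.00655 — 2 statements merged into one kernel-verified Lean document; each statement's English description precedes it below -/
import Mathlib

section
/- Let P : ℝ^s → ℝ^s be firmly nonexpansive with respect to a symmetric positive definite matrix R, i.e. ‖Px − Py‖_R² ≤ ⟨Px − Py, x − y⟩_R for all x, y. Let E, M₀, M₁, M₂ be s×s matrices with RE = R + S for a skew-symmetric matrix S and RE − M₀ arbitrary. Define T(s,z) := the (assumed unique) ω satisfying ω = P((E − R^{−1}M₀)ω + R^{−1}M₁ s + R^{−1}M₂ z). Then T is weakly firmly nonexpansive with respect to {M₀, M₁, M₂}: whenever ω^i = T(s^i, z^i) for i = 1,2, one has ⟨ω²−ω¹, M₀(ω²−ω¹)⟩ ≤ ⟨ω²−ω¹, M₁(s²−s¹) + M₂(z²−z¹)⟩. -/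
/-!
Write `w = ω² - ω¹` and let `xⁱ` be the argument of `P` in the fixed-point equation for `ωⁱ`,
so that `P xⁱ = ωⁱ`. Multiplying by `R` and using `RE = R + S` gives
`R (x² - x¹) = (R + S - M₀) w + M₁ (s² - s¹) + M₂ (z² - z¹)`. Firm nonexpansiveness of `P` at
`x², x¹` reads `⟨w, R w⟩ ≤ ⟨w, R (x² - x¹)⟩`; the `R`-terms cancel and the skew part vanishes,
`⟨w, S w⟩ = 0`, leaving exactly the claimed inequality.
-/

open scoped BigOperators
open Matrix

noncomputable def dotR {s : ℕ} (x y : Fin s → ℝ) : ℝ := ∑ i, x i * y i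

lemma dotR_eq_dotProduct {s : ℕ} (x y : Fin s → ℝ) : dotR x y = x ⬝ᵥ y := rfl

namespace Matrix

variable {n α : Type*} [Fintype n] [CommRing α]

lemma dotProduct_mulVec_self_eq_zero_of_transpose_eq_neg [IsAddTorsionFree α]
    {S : Matrix n n α} (hS : Sᵀ = -S) (v : n → α) : v ⬝ᵥ S *ᵥ v = 0 := by
  refine self_eq_neg.mp ?_
  calc v ⬝ᵥ S *ᵥ v = v ᵥ* S ⬝ᵥ v := dotProduct_mulVec v S v
    _ = -S *ᵥ v ⬝ᵥ v := by rw [← mulVec_transpose, hS]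
    _ = -(v ⬝ᵥ S *ᵥ v) := by rw [neg_mulVec, neg_dotProduct, dotProduct_comm]

variable [DecidableEq n]

lemma mul_sub_inv_mul_eq {R E M S : Matrix n n α} (hR : IsUnit R.det) (hRE : R * E = R + S) :
    R * (E - R⁻¹ * M) = R + S - M := by
  rw [Matrix.mul_sub, hRE, mul_nonsing_inv_cancel_left R M hR]

lemma mulVec_sub_inv_mul_mulVec_add_eq {R E M₀ M₁ M₂ S : Matrix n n α} (hR : IsUnit R.det)
    (hRE : R * E = R + S) (ω s z : n → α) :
    R *ᵥ ((E - R⁻¹ * M₀) *ᵥ ω + (R⁻¹ * M₁) *ᵥ s + (R⁻¹ * M₂) *ᵥ z) =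
      (R + S - M₀) *ᵥ ω + M₁ *ᵥ s + M₂ *ᵥ z := by
  simp only [mulVec_add, mulVec_mulVec, mul_sub_inv_mul_eq hR hRE,
    mul_nonsing_inv_cancel_left R _ hR]

end Matrix

/-- if `P` is firmly nonexpansive w.r.t. a symmetric positive definite
`R`, `RE = R + S` with `S` skew-symmetric, and `ωⁱ = P((E - R⁻¹M₀)ωⁱ + R⁻¹M₁sⁱ + R⁻¹M₂zⁱ)`
for `i = 1,2`, then `⟨ω²-ω¹, M₀(ω²-ω¹)⟩ ≤ ⟨ω²-ω¹, M₁(s²-s¹) + M₂(z²-z¹)⟩`. -/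
theorem statement14 {s : ℕ} (R E M0 M1 M2 S : Matrix (Fin s) (Fin s) ℝ)
    (hR : R.PosDef) (hS : Sᵀ = -S) (hRE : R * E = R + S)
    (P : (Fin s → ℝ) → (Fin s → ℝ))
    (hP : ∀ x y, dotR (P x - P y) (R.mulVec (P x - P y)) ≤
                 dotR (P x - P y) (R.mulVec (x - y)))
    (ω1 ω2 s1 s2 z1 z2 : Fin s → ℝ)
    (h1 : ω1 = P ((E - R⁻¹ * M0).mulVec ω1 + (R⁻¹ * M1).mulVec s1 + (R⁻¹ * M2).mulVec z1))
    (h2 : ω2 = P ((E - R⁻¹ * M0).mulVec ω2 + (R⁻¹ * M1).mulVec s2 + (R⁻¹ * M2).mulVec z2)) :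
    dotR (ω2 - ω1) (M0.mulVec (ω2 - ω1)) ≤
      dotR (ω2 - ω1) (M1.mulVec (s2 - s1) + M2.mulVec (z2 - z1)) := by
  have hdet : IsUnit R.det := isUnit_iff_ne_zero.mpr hR.det_pos.ne'
  have hfirm := hP
    ((E - R⁻¹ * M0) *ᵥ ω2 + (R⁻¹ * M1) *ᵥ s2 + (R⁻¹ * M2) *ᵥ z2)
    ((E - R⁻¹ * M0) *ᵥ ω1 + (R⁻¹ * M1) *ᵥ s1 + (R⁻¹ * M2) *ᵥ z1)
  rw [← h1, ← h2] at hfirm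
  simp only [mulVec_sub, mulVec_sub_inv_mul_mulVec_add_eq hdet hRE] at hfirm
  have hskew := dotProduct_mulVec_self_eq_zero_of_transpose_eq_neg hS (ω2 - ω1)
  simp only [dotR_eq_dotProduct, add_mulVec, sub_mulVec, mulVec_sub, dotProduct_add,
    dotProduct_sub] at hfirm hskew ⊢
  linarith
end

section
/- With H = [[O, −θGᵀ],[−θG, F]] symmetric positive definite under the condition |θ|·‖F^{−1/2} G O^{−1/2}‖₂ < 1 (O, F symmetric positive definite), the operator norm of H^{−1} satisfies ‖H^{−1}‖₂ ≤ max{‖O^{−1}‖₂, ‖F^{−1}‖₂} / (1 − |θ|·‖F^{−1/2} G O^{−1/2}‖₂). -/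
open Matrix

/-- The spectral (ℓ2 operator) norm of a real matrix. -/
noncomputable def specNorm {a b : Type*} [Fintype a] [Fintype b] [DecidableEq b]
    (M : Matrix a b ℝ) : ℝ :=
  ‖LinearMap.toContinuousLinearMap (Matrix.toEuclideanLin M)‖

open scoped RealInnerProductSpace

section Aux
variable {n a b : Type*} [Fintype n] [Fintype a] [Fintype b] [DecidableEq b]

lemma inner_eq_dot (x y : n → ℝ) :
    ⟪(WithLp.equiv 2 (n → ℝ)).symm x, (WithLp.equiv 2 (n → ℝ)).symm y⟫ = x ⬝ᵥ y := by
  simp [PiLp.inner_apply, dotProduct, mul_comm]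

lemma nrm_sq (z : n → ℝ) :
    ‖(WithLp.equiv 2 (n → ℝ)).symm z‖ * ‖(WithLp.equiv 2 (n → ℝ)).symm z‖ = z ⬝ᵥ z := by
  rw [← inner_eq_dot]; exact (real_inner_self_eq_norm_mul_norm _).symm

lemma abs_dot_mulVec_le (M : Matrix a b ℝ) (y : a → ℝ) (x : b → ℝ) :
    |y ⬝ᵥ M *ᵥ x| ≤ specNorm M * (‖(WithLp.equiv 2 (a → ℝ)).symm y‖ * ‖(WithLp.equiv 2 (b → ℝ)).symm x‖) := by
  have h1 : y ⬝ᵥ M *ᵥ x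
      = ⟪(WithLp.equiv 2 (a → ℝ)).symm y, toEuclideanLin M ((WithLp.equiv 2 (b → ℝ)).symm x)⟫ := by
    exact (inner_eq_dot y (M *ᵥ x)).symm
  rw [h1]
  calc |⟪(WithLp.equiv 2 (a → ℝ)).symm y, toEuclideanLin M ((WithLp.equiv 2 (b → ℝ)).symm x)⟫|
      ≤ ‖(WithLp.equiv 2 (a → ℝ)).symm y‖ * ‖toEuclideanLin M ((WithLp.equiv 2 (b → ℝ)).symm x)‖ :=
        abs_real_inner_le_norm _ _
    _ ≤ ‖(WithLp.equiv 2 (a → ℝ)).symm y‖ * (specNorm M * ‖(WithLp.equiv 2 (b → ℝ)).symm x‖) := by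
        exact mul_le_mul_of_nonneg_left
          ((LinearMap.toContinuousLinearMap (toEuclideanLin M)).le_opNorm _) (norm_nonneg _)
    _ = _ := by ring

end Aux

section Sqrt
variable {n : Type*} [Fintype n] [DecidableEq n]

lemma sqrtc_mul_self {A : Matrix n n ℝ} (hA : A.PosDef) :
    hA.posSemidef.1.cfc Real.sqrt * hA.posSemidef.1.cfc Real.sqrt = A := by
  rw [← hA.posSemidef.1.cfc_eq, ← cfc_mul Real.sqrt Real.sqrt A]
  conv_rhs => rw [← cfc_id' ℝ A (ha := hA.posSemidef.1.isSelfAdjoint)]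
  refine cfc_congr fun x hx => ?_
  obtain ⟨i, rfl⟩ := hA.posSemidef.1.spectrum_real_eq_range_eigenvalues ▸ hx
  exact Real.mul_self_sqrt (hA.posSemidef.eigenvalues_nonneg i)

lemma sqrt_isUnit_det {A : Matrix n n ℝ} (hA : A.PosDef) :
    IsUnit (hA.posSemidef.1.cfc Real.sqrt).det := by
  have h2 : (hA.posSemidef.1.cfc Real.sqrt).det * (hA.posSemidef.1.cfc Real.sqrt).det = A.det := by
    rw [← det_mul, sqrtc_mul_self hA]
  have : A.det ≠ 0 := ne_of_gt hA.det_pos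
  refine isUnit_iff_ne_zero.mpr fun h0 => this ?_
  rw [← h2, h0, mul_zero]

lemma sqrt_transpose {A : Matrix n n ℝ} (hA : A.PosDef) :
    (hA.posSemidef.1.cfc Real.sqrt)ᵀ = (hA.posSemidef.1.cfc Real.sqrt) := by
  have := (cfc_predicate Real.sqrt A : IsSelfAdjoint _)
  rw [IsSelfAdjoint, star_eq_conjTranspose, conjTranspose_eq_transpose_of_trivial] at this
  rwa [← hA.posSemidef.1.cfc_eq]

lemma sqrt_inv_transpose {A : Matrix n n ℝ} (hA : A.PosDef) :
    ((hA.posSemidef.1.cfc Real.sqrt)⁻¹)ᵀ = (hA.posSemidef.1.cfc Real.sqrt)⁻¹ := by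
  rw [transpose_nonsing_inv, sqrt_transpose hA]

lemma sqrt_inv_mul_sqrt_inv {A : Matrix n n ℝ} (hA : A.PosDef) :
    (hA.posSemidef.1.cfc Real.sqrt)⁻¹ * (hA.posSemidef.1.cfc Real.sqrt)⁻¹ = A⁻¹ := by
  rw [← Matrix.mul_inv_rev, sqrtc_mul_self hA]

/-- symmetric-square dot identity: y ⬝ᵥ (S*S) *ᵥ y = (S *ᵥ y) ⬝ᵥ (S *ᵥ y) for Sᵀ = S. -/
lemma dot_sq {S : Matrix n n ℝ} (hS : Sᵀ = S) (y : n → ℝ) :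
    y ⬝ᵥ (S * S) *ᵥ y = (S *ᵥ y) ⬝ᵥ (S *ᵥ y) := by
  rw [← mulVec_mulVec, dotProduct_mulVec, ← mulVec_transpose, hS]

end Sqrt

lemma quad_lower {m q : ℕ} (O : Matrix (Fin m) (Fin m) ℝ) (F : Matrix (Fin q) (Fin q) ℝ)
    (hO : O.PosDef) (hF : F.PosDef) (G : Matrix (Fin q) (Fin m) ℝ) (θ : ℝ)
    (x : (Fin m ⊕ Fin q) → ℝ) :
    (1 - |θ| * specNorm ((hF.posSemidef.1.cfc Real.sqrt)⁻¹ * G * (hO.posSemidef.1.cfc Real.sqrt)⁻¹)) *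
      (((hO.posSemidef.1.cfc Real.sqrt) *ᵥ (x ∘ Sum.inl)) ⬝ᵥ ((hO.posSemidef.1.cfc Real.sqrt) *ᵥ (x ∘ Sum.inl))
        + ((hF.posSemidef.1.cfc Real.sqrt) *ᵥ (x ∘ Sum.inr)) ⬝ᵥ ((hF.posSemidef.1.cfc Real.sqrt) *ᵥ (x ∘ Sum.inr)))
    ≤ x ⬝ᵥ (fromBlocks O ((-θ) • Gᵀ) ((-θ) • G) F) *ᵥ x := by
  set SO := (hO.posSemidef.1.cfc Real.sqrt) with hSO
  set SF := (hF.posSemidef.1.cfc Real.sqrt) with hSF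
  set B := SF⁻¹ * G * SO⁻¹ with hB
  set u : Fin m → ℝ := x ∘ Sum.inl with hu
  set v : Fin q → ℝ := x ∘ Sum.inr with hv
  have hx : x = Sum.elim u v := funext fun i => by cases i <;> rfl
  set a := SO *ᵥ u with ha
  set b := SF *ᵥ v with hb2
  -- G factorization
  have hG : G = SF * (B * SO) := by
    rw [hB, Matrix.mul_assoc (SF⁻¹ * G), nonsing_inv_mul SO (sqrt_isUnit_det hO), Matrix.mul_one,
      ← Matrix.mul_assoc, mul_nonsing_inv SF (sqrt_isUnit_det hF), Matrix.one_mul]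
  -- quadratic form expansion
  have hQ : x ⬝ᵥ (fromBlocks O ((-θ) • Gᵀ) ((-θ) • G) F) *ᵥ x
      = a ⬝ᵥ a + b ⬝ᵥ b + (-θ) * (b ⬝ᵥ B *ᵥ a) + (-θ) * (b ⬝ᵥ B *ᵥ a) := by
    have hGu : v ⬝ᵥ G *ᵥ u = b ⬝ᵥ B *ᵥ a := by
      rw [hG, ← mulVec_mulVec, dotProduct_mulVec v SF, ← mulVec_transpose,
        sqrt_transpose hF, ← hb2, ← mulVec_mulVec, ha]
    have hGtv : u ⬝ᵥ Gᵀ *ᵥ v = b ⬝ᵥ B *ᵥ a := by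
      rw [mulVec_transpose, dotProduct_comm, ← dotProduct_mulVec, hGu]
    have hOu : u ⬝ᵥ O *ᵥ u = a ⬝ᵥ a := by
      rw [← sqrtc_mul_self hO, dot_sq (sqrt_transpose hO), ← hSO, ← ha]
    have hFv : v ⬝ᵥ F *ᵥ v = b ⬝ᵥ b := by
      rw [← sqrtc_mul_self hF, dot_sq (sqrt_transpose hF), ← hSF, ← hb2]
    calc x ⬝ᵥ (fromBlocks O ((-θ) • Gᵀ) ((-θ) • G) F) *ᵥ x
        = u ⬝ᵥ (O *ᵥ u + ((-θ) • Gᵀ) *ᵥ v) + v ⬝ᵥ (((-θ) • G) *ᵥ u + F *ᵥ v) := by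
          rw [hx, fromBlocks_mulVec, sumElim_dotProduct_sumElim]
          simp only [Sum.elim_comp_inl, Sum.elim_comp_inr]
      _ = u ⬝ᵥ O *ᵥ u + (-θ) * (u ⬝ᵥ Gᵀ *ᵥ v) + ((-θ) * (v ⬝ᵥ G *ᵥ u) + v ⬝ᵥ F *ᵥ v) := by
          rw [dotProduct_add, dotProduct_add, smul_mulVec, smul_mulVec,
            dotProduct_smul, dotProduct_smul, smul_eq_mul, smul_eq_mul]
      _ = _ := by rw [hGu, hGtv, hOu, hFv]; ring
  rw [hQ]
  -- norms
  have hna : ‖(WithLp.equiv 2 (Fin m → ℝ)).symm a‖ * ‖(WithLp.equiv 2 (Fin m → ℝ)).symm a‖ = a ⬝ᵥ a := nrm_sq a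
  have hnb : ‖(WithLp.equiv 2 (Fin q → ℝ)).symm b‖ * ‖(WithLp.equiv 2 (Fin q → ℝ)).symm b‖ = b ⬝ᵥ b := nrm_sq b
  have hcs : |b ⬝ᵥ B *ᵥ a| ≤ specNorm B * (‖(WithLp.equiv 2 (Fin q → ℝ)).symm b‖ * ‖(WithLp.equiv 2 (Fin m → ℝ)).symm a‖) :=
    abs_dot_mulVec_le B b a
  set na := ‖(WithLp.equiv 2 (Fin m → ℝ)).symm a‖
  set nb := ‖(WithLp.equiv 2 (Fin q → ℝ)).symm b‖
  set β := specNorm B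
  set d := b ⬝ᵥ B *ᵥ a
  have hβ0 : 0 ≤ β := norm_nonneg _
  have ht0 : 0 ≤ |θ| := abs_nonneg θ
  have h1 : θ * d ≤ |θ| * (β * (nb * na)) := by
    calc θ * d ≤ |θ * d| := le_abs_self _
      _ = |θ| * |d| := abs_mul θ d
      _ ≤ |θ| * (β * (nb * na)) := mul_le_mul_of_nonneg_left hcs ht0
  have h2 : 2 * (nb * na) ≤ na * na + nb * nb := by nlinarith [sq_nonneg (na - nb)]
  rw [← hna, ← hnb]
  nlinarith [mul_le_mul_of_nonneg_left h2 (mul_nonneg ht0 hβ0)]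

lemma dot_le {m q : ℕ} (O : Matrix (Fin m) (Fin m) ℝ) (F : Matrix (Fin q) (Fin q) ℝ)
    (hO : O.PosDef) (hF : F.PosDef) (x : (Fin m ⊕ Fin q) → ℝ) :
    x ⬝ᵥ x ≤ max (specNorm O⁻¹) (specNorm F⁻¹) *
      (((hO.posSemidef.1.cfc Real.sqrt) *ᵥ (x ∘ Sum.inl)) ⬝ᵥ ((hO.posSemidef.1.cfc Real.sqrt) *ᵥ (x ∘ Sum.inl))
        + ((hF.posSemidef.1.cfc Real.sqrt) *ᵥ (x ∘ Sum.inr)) ⬝ᵥ ((hF.posSemidef.1.cfc Real.sqrt) *ᵥ (x ∘ Sum.inr))) := by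
  set SO := (hO.posSemidef.1.cfc Real.sqrt) with hSO
  set SF := (hF.posSemidef.1.cfc Real.sqrt) with hSF
  set u : Fin m → ℝ := x ∘ Sum.inl with hu
  set v : Fin q → ℝ := x ∘ Sum.inr with hv
  have hx : x = Sum.elim u v := funext fun i => by cases i <;> rfl
  set a := SO *ᵥ u with ha
  set b := SF *ᵥ v with hb2
  set K := max (specNorm O⁻¹) (specNorm F⁻¹) with hK
  have hu' : SO⁻¹ *ᵥ a = u := by
    rw [ha, mulVec_mulVec, nonsing_inv_mul SO (sqrt_isUnit_det hO), one_mulVec]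
  have hv' : SF⁻¹ *ᵥ b = v := by
    rw [hb2, mulVec_mulVec, nonsing_inv_mul SF (sqrt_isUnit_det hF), one_mulVec]
  have haa : (0:ℝ) ≤ a ⬝ᵥ a := by rw [← nrm_sq a]; exact mul_self_nonneg _
  have hbb : (0:ℝ) ≤ b ⬝ᵥ b := by rw [← nrm_sq b]; exact mul_self_nonneg _
  have hua : u ⬝ᵥ u ≤ specNorm O⁻¹ * (a ⬝ᵥ a) := by
    have h1 : u ⬝ᵥ u = a ⬝ᵥ O⁻¹ *ᵥ a := by
      rw [← hu', ← dot_sq (sqrt_inv_transpose hO) a, sqrt_inv_mul_sqrt_inv hO]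
    rw [h1, ← nrm_sq a]
    calc a ⬝ᵥ O⁻¹ *ᵥ a ≤ |a ⬝ᵥ O⁻¹ *ᵥ a| := le_abs_self _
      _ ≤ specNorm O⁻¹ * (‖(WithLp.equiv 2 (Fin m → ℝ)).symm a‖ * ‖(WithLp.equiv 2 (Fin m → ℝ)).symm a‖) :=
          abs_dot_mulVec_le _ _ _
  have hvb : v ⬝ᵥ v ≤ specNorm F⁻¹ * (b ⬝ᵥ b) := by
    have h1 : v ⬝ᵥ v = b ⬝ᵥ F⁻¹ *ᵥ b := by
      rw [← hv', ← dot_sq (sqrt_inv_transpose hF) b, sqrt_inv_mul_sqrt_inv hF]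
    rw [h1, ← nrm_sq b]
    calc b ⬝ᵥ F⁻¹ *ᵥ b ≤ |b ⬝ᵥ F⁻¹ *ᵥ b| := le_abs_self _
      _ ≤ specNorm F⁻¹ * (‖(WithLp.equiv 2 (Fin q → ℝ)).symm b‖ * ‖(WithLp.equiv 2 (Fin q → ℝ)).symm b‖) :=
          abs_dot_mulVec_le _ _ _
  have hxx : x ⬝ᵥ x = u ⬝ᵥ u + v ⬝ᵥ v := by rw [hx, sumElim_dotProduct_sumElim]
  have hO_le : specNorm O⁻¹ ≤ K := le_max_left _ _
  have hF_le : specNorm F⁻¹ ≤ K := le_max_right _ _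
  calc x ⬝ᵥ x = u ⬝ᵥ u + v ⬝ᵥ v := hxx
    _ ≤ specNorm O⁻¹ * (a ⬝ᵥ a) + specNorm F⁻¹ * (b ⬝ᵥ b) := add_le_add hua hvb
    _ ≤ K * (a ⬝ᵥ a) + K * (b ⬝ᵥ b) :=
        add_le_add (mul_le_mul_of_nonneg_right hO_le haa) (mul_le_mul_of_nonneg_right hF_le hbb)
    _ = K * (a ⬝ᵥ a + b ⬝ᵥ b) := by ring

lemma H_isUnit {m q : ℕ} (O : Matrix (Fin m) (Fin m) ℝ) (F : Matrix (Fin q) (Fin q) ℝ)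
    (hO : O.PosDef) (hF : F.PosDef) (G : Matrix (Fin q) (Fin m) ℝ) (θ : ℝ)
    (h : |θ| * specNorm ((hF.posSemidef.1.cfc Real.sqrt)⁻¹ * G * (hO.posSemidef.1.cfc Real.sqrt)⁻¹) < 1) :
    IsUnit (Matrix.fromBlocks O ((-θ) • Gᵀ) ((-θ) • G) F) := by
  set H := Matrix.fromBlocks O ((-θ) • Gᵀ) ((-θ) • G) F with hH
  have hc : 0 < 1 - |θ| * specNorm ((hF.posSemidef.1.cfc Real.sqrt)⁻¹ * G * (hO.posSemidef.1.cfc Real.sqrt)⁻¹) := by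
    linarith
  refine mulVec_injective_iff_isUnit.mp fun x y hxy => ?_
  have hz : H *ᵥ (x - y) = 0 := by rw [mulVec_sub, hxy, sub_self]
  have hzero : x - y = 0 := by
    set z := x - y with hzdef
    have hq := quad_lower O F hO hF G θ z
    rw [← hH, hz, dotProduct_zero] at hq
    set a := (hO.posSemidef.1.cfc Real.sqrt) *ᵥ (z ∘ Sum.inl) with ha
    set b := (hF.posSemidef.1.cfc Real.sqrt) *ᵥ (z ∘ Sum.inr) with hb
    have haa : (0:ℝ) ≤ a ⬝ᵥ a := by rw [← nrm_sq a]; exact mul_self_nonneg _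
    have hbb : (0:ℝ) ≤ b ⬝ᵥ b := by rw [← nrm_sq b]; exact mul_self_nonneg _
    have hab : a ⬝ᵥ a + b ⬝ᵥ b = 0 := by nlinarith
    have ha0 : a = 0 := dotProduct_self_eq_zero.mp (by linarith [hbb, haa])
    have hb0 : b = 0 := dotProduct_self_eq_zero.mp (by linarith [hbb, haa])
    have hinjO : Function.Injective ((hO.posSemidef.1.cfc Real.sqrt)).mulVec :=
      mulVec_injective_iff_isUnit.mpr ((isUnit_iff_isUnit_det _).mpr (sqrt_isUnit_det hO))
    have hinjF : Function.Injective ((hF.posSemidef.1.cfc Real.sqrt)).mulVec :=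
      mulVec_injective_iff_isUnit.mpr ((isUnit_iff_isUnit_det _).mpr (sqrt_isUnit_det hF))
    have hu0 : z ∘ Sum.inl = 0 := hinjO (by rw [← ha, ha0, mulVec_zero])
    have hv0 : z ∘ Sum.inr = 0 := hinjF (by rw [← hb, hb0, mulVec_zero])
    funext i
    cases i with
    | inl i => exact congrFun hu0 i
    | inr i => exact congrFun hv0 i
  exact sub_eq_zero.mp hzero

/-- with `H = [[O, -θGᵀ],[-θG, F]]` and
`|θ|·‖F^{-1/2} G O^{-1/2}‖₂ < 1` (`O`, `F` symmetric positive definite),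
`‖H⁻¹‖₂ ≤ max{‖O⁻¹‖₂, ‖F⁻¹‖₂} / (1 - |θ|·‖F^{-1/2} G O^{-1/2}‖₂)`. -/
theorem statement17 {m q : ℕ} (O : Matrix (Fin m) (Fin m) ℝ)
    (F : Matrix (Fin q) (Fin q) ℝ) (hO : O.PosDef) (hF : F.PosDef)
    (G : Matrix (Fin q) (Fin m) ℝ) (θ : ℝ)
    (h : |θ| * specNorm ((hF.posSemidef.1.cfc Real.sqrt)⁻¹ * G * (hO.posSemidef.1.cfc Real.sqrt)⁻¹) < 1) :
    specNorm (Matrix.fromBlocks O ((-θ) • Gᵀ) ((-θ) • G) F)⁻¹ ≤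
      max (specNorm O⁻¹) (specNorm F⁻¹) /
        (1 - |θ| * specNorm ((hF.posSemidef.1.cfc Real.sqrt)⁻¹ * G * (hO.posSemidef.1.cfc Real.sqrt)⁻¹)) := by
  set H := Matrix.fromBlocks O ((-θ) • Gᵀ) ((-θ) • G) F with hH
  set β := specNorm ((hF.posSemidef.1.cfc Real.sqrt)⁻¹ * G * (hO.posSemidef.1.cfc Real.sqrt)⁻¹) with hβ
  set K := max (specNorm O⁻¹) (specNorm F⁻¹) with hK
  have hc : 0 < 1 - |θ| * β := by linarith
  have hK0 : 0 ≤ K := le_trans (norm_nonneg _) (le_max_left _ _)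
  have hHdet : IsUnit H.det := (isUnit_iff_isUnit_det _).mp (H_isUnit O F hO hF G θ h)
  show ‖LinearMap.toContinuousLinearMap (toEuclideanLin H⁻¹)‖ ≤ K / (1 - |θ| * β)
  refine ContinuousLinearMap.opNorm_le_bound _ (div_nonneg hK0 hc.le) fun y => ?_
  simp only [LinearMap.coe_toContinuousLinearMap']
  set xe := toEuclideanLin H⁻¹ y with hxe
  set xf := WithLp.equiv 2 ((Fin m ⊕ Fin q) → ℝ) xe with hxf
  have hxer : (WithLp.equiv 2 ((Fin m ⊕ Fin q) → ℝ)).symm xf = xe :=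
    (WithLp.equiv _ _).symm_apply_apply xe
  have hHx : toEuclideanLin H xe = y := by
    rw [hxe, toEuclideanLin_apply, toEuclideanLin_apply]
    simp only [Equiv.apply_symm_apply, mulVec_mulVec, mul_nonsing_inv _ hHdet, one_mulVec,
      Equiv.symm_apply_apply]
  have h1 : (WithLp.equiv 2 ((Fin m ⊕ Fin q) → ℝ)).symm (H *ᵥ xf) = y := by
    rw [hxf]; exact hHx
  have hQy : xf ⬝ᵥ (H *ᵥ xf) = ⟪xe, y⟫ := by
    rw [← inner_eq_dot, hxer, h1]
  have hnx : ‖xe‖ * ‖xe‖ = xf ⬝ᵥ xf := by rw [← hxer]; exact nrm_sq xf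
  have hql := quad_lower O F hO hF G θ xf
  have hdl := dot_le O F hO hF xf
  rw [← hH, ← hβ] at hql
  rw [← hK] at hdl
  have hinner : ⟪xe, y⟫ ≤ ‖xe‖ * ‖y‖ := real_inner_le_norm xe y
  set A := ((hO.posSemidef.1.cfc Real.sqrt) *ᵥ (xf ∘ Sum.inl)) ⬝ᵥ ((hO.posSemidef.1.cfc Real.sqrt) *ᵥ (xf ∘ Sum.inl))
      + ((hF.posSemidef.1.cfc Real.sqrt) *ᵥ (xf ∘ Sum.inr)) ⬝ᵥ ((hF.posSemidef.1.cfc Real.sqrt) *ᵥ (xf ∘ Sum.inr)) with hA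
  have key : (1 - |θ| * β) * (‖xe‖ * ‖xe‖) ≤ K * (‖xe‖ * ‖y‖) := by
    calc (1 - |θ| * β) * (‖xe‖ * ‖xe‖) = (1 - |θ| * β) * (xf ⬝ᵥ xf) := by rw [hnx]
      _ ≤ (1 - |θ| * β) * (K * A) := mul_le_mul_of_nonneg_left hdl hc.le
      _ = K * ((1 - |θ| * β) * A) := by ring
      _ ≤ K * (xf ⬝ᵥ (H *ᵥ xf)) := mul_le_mul_of_nonneg_left hql hK0
      _ = K * ⟪xe, y⟫ := by rw [hQy]
      _ ≤ K * (‖xe‖ * ‖y‖) := mul_le_mul_of_nonneg_left hinner hK0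
  rcases eq_or_lt_of_le (norm_nonneg xe) with hx0 | hx0
  · rw [← hx0]
    positivity
  · rw [div_mul_eq_mul_div, le_div_iff₀ hc]
    nlinarith [key, hx0]
end
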